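/- Let H₀ and K be complex Hilbert spaces, T₀ ∈ B(H₀), V ∈ B(K) an isometry (‖Vk‖ = ‖k‖ for all k ∈ K), and A ∈ B(K, H₀). Let R be the block operator on H₀ ⊕₂ K defined by R(x, k) = (T₀x + Ak, Vk). Assume that there is a nonzero polynomial p with complex coefficients, all of whose roots lie in the open unit disc, such that p(T₀) = 0, and that R is polynomially bounded. Then R is similar to a contraction. -/

import Mathlib

noncomputable section

/-- An operator `T` is polynomially bounded if `‖p(T)‖ ≤ M · sup_{|z| ≤ 1} |p(z)|`
for some `M > 0` and all polynomials `p`. -/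
def PolynomiallyBounded {H : Type*} [NormedAddCommGroup H] [NormedSpace ℂ H] (T : H →L[ℂ] H) : Prop :=
  ∃ M : ℝ, 0 < M ∧ ∀ p : Polynomial ℂ,
    ‖Polynomial.aeval T p‖ ≤ M * sSup ((fun z : ℂ => ‖p.eval z‖) '' {z : ℂ | ‖z‖ ≤ 1})

/-- An operator `T` is similar to a contraction if `‖X T X⁻¹‖ ≤ 1` for some continuous linear
equivalence `X`. -/
def SimilarToContraction {H : Type*} [NormedAddCommGroup H] [NormedSpace ℂ H] (T : H →L[ℂ] H) : Prop :=
  ∃ X : H ≃L[ℂ] H, ‖((X : H →L[ℂ] H).comp T).comp (X.symm : H →L[ℂ] H)‖ ≤ 1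

/-!
Since `p(T₀) = 0` and the roots of `p` lie in the open disc, spectral mapping gives `r(T₀) < 1`,
so by Gelfand's formula `‖T₀ⁿ‖` decays geometrically. Hence `P = ∑ T₀ⁿ* T₀ⁿ` converges and
satisfies the Stein equation `P = 1 + T₀* P T₀`; with `S = √P` (invertible as `P ≥ 1`) this reads
`‖S T₀ x‖² = ‖S x‖² - ‖x‖²`, so `S T₀ S⁻¹` is a contraction. The Sylvester equation
`Y V - T₀ Y = A` is solved by `Y = ∑ T₀ⁿ A (V*)ⁿ⁺¹`, which telescopes because `V* V = 1`.
Conjugating `R` by `(x, k) ↦ (S (x - Y k), k)` turns it into `S T₀ S⁻¹ ⊕ V`, a contraction.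
-/

open Filter ContinuousLinearMap
open scoped NNReal

section Spectrum

variable {A : Type*} [NormedRing A] [NormedAlgebra ℂ A] [CompleteSpace A]

theorem spectralRadius_lt_one_of_aeval_eq_zero {a : A} {p : Polynomial ℂ}
    (hroots : ∀ z : ℂ, p.eval z = 0 → ‖z‖ < 1) (hpa : Polynomial.aeval a p = 0) :
    spectralRadius ℂ a < 1 := by
  rcases subsingleton_or_nontrivial A with hA | hA
  · simp [spectralRadius, spectrum.of_subsingleton]
  refine spectrum.spectralRadius_lt_of_forall_lt_of_nonempty (spectrum.nonempty a) fun z hz => ?_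
  have hpz : p.eval z ∈ spectrum ℂ (Polynomial.aeval a p) :=
    spectrum.subset_polynomial_aeval a p ⟨z, hz, rfl⟩
  rw [hpa, spectrum.zero_eq, Set.mem_singleton_iff] at hpz
  exact_mod_cast hroots z hpz

theorem eventually_norm_pow_le_of_spectralRadius_lt (a : A) {r : ℝ≥0}
    (h : spectralRadius ℂ a < r) : ∀ᶠ n : ℕ in atTop, ‖a ^ n‖ ≤ r ^ n := by
  have hgelfand := spectrum.pow_nnnorm_pow_one_div_tendsto_nhds_spectralRadius a
  filter_upwards [hgelfand.eventually_lt_const h, eventually_ne_atTop 0] with n hn hn0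
  rw [one_div, ENNReal.rpow_inv_lt_iff (by positivity), ENNReal.rpow_natCast] at hn
  exact_mod_cast hn.le

theorem summable_norm_pow_pow_of_spectralRadius_lt_one {a : A} (h : spectralRadius ℂ a < 1)
    {k : ℕ} (hk : k ≠ 0) : Summable fun n => ‖a ^ n‖ ^ k := by
  obtain ⟨r, hr, hr1⟩ := ENNReal.lt_iff_exists_nnreal_btwn.mp h
  have hrk : (r : ℝ) ^ k < 1 := pow_lt_one₀ r.2 (by exact_mod_cast hr1) hk
  refine (summable_geometric_of_lt_one (by positivity) hrk).of_norm_bounded_eventually_nat ?_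
  filter_upwards [eventually_norm_pow_le_of_spectralRadius_lt a hr] with n hn
  rw [Real.norm_of_nonneg (by positivity), ← pow_mul, mul_comm, pow_mul]
  gcongr

end Spectrum

section Sylvester

variable {𝕜 E F : Type*} [NontriviallyNormedField 𝕜]
  [NormedAddCommGroup E] [NormedSpace 𝕜 E] [CompleteSpace E]
  [NormedAddCommGroup F] [NormedSpace 𝕜 F]

theorem norm_pow_le_one_of_norm_le_one {W : F →L[𝕜] F} (hW : ‖W‖ ≤ 1) (n : ℕ) : ‖W ^ n‖ ≤ 1 := by
  cases n with
  | zero => exact norm_id_le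
  | succ n => exact (norm_pow_le' W n.succ_pos).trans (pow_le_one₀ (norm_nonneg W) hW)

theorem exists_comp_sub_comp_eq_of_summable_norm_pow {T : E →L[𝕜] E}
    (hT : Summable fun n => ‖T ^ n‖) {V W : F →L[𝕜] F} (hWV : W ∘L V = 1) (hW : ‖W‖ ≤ 1)
    (A : F →L[𝕜] E) : ∃ Y : F →L[𝕜] E, Y ∘L V - T ∘L Y = A := by
  set g : ℕ → F →L[𝕜] E := fun n => (T ^ n) ∘L A ∘L (W ^ n)
  have hg : Summable g := by
    refine (hT.mul_right ‖A‖).of_norm_bounded fun n => ?_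
    calc ‖g n‖ ≤ ‖T ^ n‖ * (‖A‖ * ‖W ^ n‖) :=
          (opNorm_comp_le _ _).trans (by gcongr; exact opNorm_comp_le _ _)
      _ ≤ ‖T ^ n‖ * ‖A‖ := by
          gcongr; exact mul_le_of_le_one_right (norm_nonneg _) (norm_pow_le_one_of_norm_le_one hW n)
  have hshift : ∀ n, T ∘L g n ∘L W = g (n + 1) := fun n => by
    simp only [g, pow_succ' T, pow_succ W, mul_def, comp_assoc]
  refine ⟨(∑' n, g n) ∘L W, ?_⟩
  have hTY : T ∘L (∑' n, g n) ∘L W = ∑' n, g (n + 1) := by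
    have hT_tsum : T ∘L (∑' n, g n) = ∑' n, T ∘L g n := (compL 𝕜 F E E T).map_tsum hg
    rw [← tsum_congr hshift, ← comp_assoc, hT_tsum]
    exact ((compL 𝕜 F F E).flip W).map_tsum (hg.mapL (compL 𝕜 F E E T))
  rw [comp_assoc, hWV, one_def, comp_id, hTY, hg.tsum_eq_zero_add]
  simp [g, one_def]

end Sylvester

theorem similarToContraction_iff_exists_norm_apply_le {H : Type*} [NormedAddCommGroup H]
    [NormedSpace ℂ H] (T : H →L[ℂ] H) :
    SimilarToContraction T ↔ ∃ X : H ≃L[ℂ] H, ∀ x, ‖X (T x)‖ ≤ ‖X x‖ := by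
  refine exists_congr fun X => ⟨fun h x => ?_, fun h => opNorm_le_bound _ zero_le_one fun x => ?_⟩
  · simpa using (le_of_opNorm_le _ h (X x))
  · simpa using h (X.symm x)

theorem norm_apply_le_of_star_mul_self_le {𝕜 E : Type*} [RCLike 𝕜] [NormedAddCommGroup E]
    [InnerProductSpace 𝕜 E] [CompleteSpace E] {B C : E →L[𝕜] E} (h : star B * B ≤ star C * C)
    (x : E) : ‖B x‖ ≤ ‖C x‖ := by
  have hx := ((le_def _ _).mp h).re_inner_nonneg_right x
  rw [sub_apply, inner_sub_right, map_sub, sub_nonneg] at hx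
  rw [← sq_le_sq₀ (norm_nonneg _) (norm_nonneg _), apply_norm_sq_eq_inner_adjoint_right,
    apply_norm_sq_eq_inner_adjoint_right]
  simpa only [star_eq_adjoint, mul_def] using hx

section Renorming

variable {H : Type*} [NormedAddCommGroup H] [InnerProductSpace ℂ H] [CompleteSpace H]

theorem tsum_star_pow_mul_pow_eq_one_add {T : H →L[ℂ] H} (hT : Summable fun n => ‖T ^ n‖ ^ 2) :
    ∑' n, star (T ^ n) * T ^ n = 1 + star T * (∑' n, star (T ^ n) * T ^ n) * T := by
  have hs : Summable fun n => star (T ^ n) * T ^ n :=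
    hT.of_norm_bounded fun n => by rw [CStarRing.norm_star_mul_self, sq]
  conv_lhs => rw [hs.tsum_eq_zero_add]
  rw [← hs.tsum_mul_left, ← (hs.mul_left (star T)).tsum_mul_right]
  simp [pow_succ, star_mul, mul_assoc]

theorem similarToContraction_of_summable_norm_pow_sq {T : H →L[ℂ] H}
    (hT : Summable fun n => ‖T ^ n‖ ^ 2) : SimilarToContraction T := by
  set P := ∑' n, star (T ^ n) * T ^ n
  have hP : P = 1 + star T * P * T := tsum_star_pow_mul_pow_eq_one_add hT
  have hP_nonneg : 0 ≤ P := tsum_nonneg fun n => star_mul_self_nonneg _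
  have hP_one : 1 ≤ P := by
    rw [hP]; exact le_add_of_nonneg_right (star_left_conjugate_nonneg hP_nonneg T)
  set S := CFC.sqrt P
  have hS : IsUnit S := (CFC.isUnit_sqrt_iff P hP_nonneg).mpr
    (CStarAlgebra.isUnit_of_le 1 hP_one isStrictlyPositive_one)
  have hSS : star S * S = P := by
    rw [(CFC.sqrt_nonneg P).isSelfAdjoint.star_eq, CFC.sqrt_mul_sqrt_self P hP_nonneg]
  refine (similarToContraction_iff_exists_norm_apply_le T).mpr
    ⟨.unitsEquiv ℂ H hS.unit, norm_apply_le_of_star_mul_self_le (B := S * T) (C := S) ?_⟩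
  rw [star_mul, mul_assoc, ← mul_assoc (star S), hSS, ← mul_assoc]
  exact (le_add_of_nonneg_left zero_le_one).trans_eq hP.symm

end Renorming

theorem norm_withLp_prod_le_of_le {E F : Type*} [SeminormedAddCommGroup E]
    [SeminormedAddCommGroup F] {x y : WithLp 2 (E × F)} (hfst : ‖x.fst‖ ≤ ‖y.fst‖)
    (hsnd : ‖x.snd‖ ≤ ‖y.snd‖) : ‖x‖ ≤ ‖y‖ := by
  rw [WithLp.prod_norm_eq_of_L2, WithLp.prod_norm_eq_of_L2]
  gcongr

theorem similarToContraction_of_blockTriangular {E F : Type*} [NormedAddCommGroup E]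
    [NormedSpace ℂ E] [NormedAddCommGroup F] [NormedSpace ℂ F] {T : E →L[ℂ] E} {V : F →L[ℂ] F}
    {A : F →L[ℂ] E} {R : WithLp 2 (E × F) →L[ℂ] WithLp 2 (E × F)}
    (hR : ∀ x k, R (WithLp.toLp 2 (x, k)) = WithLp.toLp 2 (T x + A k, V k))
    (hT : SimilarToContraction T) (hV : ∀ k, ‖V k‖ ≤ ‖k‖) {Y : F →L[ℂ] E}
    (hY : Y ∘L V - T ∘L Y = A) : SimilarToContraction R := by
  obtain ⟨S, hS⟩ := (similarToContraction_iff_exists_norm_apply_le T).mp hT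
  let shear : (E × F) ≃L[ℂ] (E × F) :=
    .equivOfInverse ((fst ℂ E F - Y ∘L snd ℂ E F).prod (snd ℂ E F))
      ((fst ℂ E F + Y ∘L snd ℂ E F).prod (snd ℂ E F)) (fun _ => by simp) (fun _ => by simp)
  let eL := WithLp.prodContinuousLinearEquiv 2 ℂ E F
  let X := eL.trans ((shear.trans (S.prodCongr (.refl ℂ F))).trans eL.symm)
  refine (similarToContraction_iff_exists_norm_apply_le R).mpr ⟨X, fun v => ?_⟩
  obtain ⟨x, k⟩ := v
  have hXR : X (R (WithLp.toLp 2 (x, k))) = WithLp.toLp 2 (S (T (x - Y k)), V k) := by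
    have hA : A k = Y (V k) - T (Y k) := by rw [← hY]; rfl
    rw [hR]
    -- `X (x, k) = (S (x - Y k), k)`
    show WithLp.toLp 2 (S (T x + A k - Y (V k)), V k) = _
    rw [hA, map_sub T]
    congr 3
    abel
  rw [hXR]
  exact norm_withLp_prod_le_of_le (hS _) (hV k)

theorem similarToContraction_of_isometric_corner_general
    {H₀ K : Type}
    [NormedAddCommGroup H₀] [InnerProductSpace ℂ H₀] [CompleteSpace H₀]
    [NormedAddCommGroup K] [InnerProductSpace ℂ K] [CompleteSpace K]
    (T₀ : H₀ →L[ℂ] H₀) (V : K →L[ℂ] K) (hViso : ∀ k : K, ‖V k‖ = ‖k‖)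
    (A : K →L[ℂ] H₀)
    (R : WithLp 2 (H₀ × K) →L[ℂ] WithLp 2 (H₀ × K))
    (hR : ∀ (x : H₀) (k : K),
      R ((WithLp.equiv 2 (H₀ × K)).symm (x, k))
        = (WithLp.equiv 2 (H₀ × K)).symm (T₀ x + A k, V k))
    (p : Polynomial ℂ)
    (hroots : ∀ z : ℂ, p.eval z = 0 → ‖z‖ < 1)
    (hpT₀ : Polynomial.aeval T₀ p = 0) :
    SimilarToContraction R := by
  have hρ : spectralRadius ℂ T₀ < 1 := spectralRadius_lt_one_of_aeval_eq_zero hroots hpT₀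
  have hT₀ : SimilarToContraction T₀ := similarToContraction_of_summable_norm_pow_sq
    (summable_norm_pow_pow_of_spectralRadius_lt_one hρ two_ne_zero)
  have hV : ‖V‖ ≤ 1 := opNorm_le_bound _ zero_le_one fun k => by rw [hViso, one_mul]
  obtain ⟨Y, hY⟩ := exists_comp_sub_comp_eq_of_summable_norm_pow
    (by simpa using summable_norm_pow_pow_of_spectralRadius_lt_one hρ one_ne_zero)
    ((norm_map_iff_adjoint_comp_self V).mp hViso) ((LinearIsometryEquiv.norm_map _ V).trans_le hV)
    A
  exact similarToContraction_of_blockTriangular hR hT₀ (fun k => (hViso k).le) hY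

/-- Theorem 2.3 in the case where the annihilating inner function is a finite Blaschke
product: if `p(T₀) = 0` for a nonzero polynomial `p` with all roots in the open unit disc,
`V` is an isometry, and the block operator `R(x,k) = (T₀x + Ak, Vk)` is polynomially
bounded, then `R` is similar to a contraction. -/
theorem similarToContraction_of_isometric_corner
    {H₀ K : Type}
    [NormedAddCommGroup H₀] [InnerProductSpace ℂ H₀] [CompleteSpace H₀]
    [NormedAddCommGroup K] [InnerProductSpace ℂ K] [CompleteSpace K]
    (T₀ : H₀ →L[ℂ] H₀) (V : K →L[ℂ] K) (hViso : ∀ k : K, ‖V k‖ = ‖k‖)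
    (A : K →L[ℂ] H₀)
    (R : WithLp 2 (H₀ × K) →L[ℂ] WithLp 2 (H₀ × K))
    (hR : ∀ (x : H₀) (k : K),
      R ((WithLp.equiv 2 (H₀ × K)).symm (x, k))
        = (WithLp.equiv 2 (H₀ × K)).symm (T₀ x + A k, V k))
    (p : Polynomial ℂ) (hp : p ≠ 0)
    (hroots : ∀ z : ℂ, p.eval z = 0 → ‖z‖ < 1)
    (hpT₀ : Polynomial.aeval T₀ p = 0)
    (hRpb : PolynomiallyBounded R) :
    SimilarToContraction R :=
  similarToContraction_of_isometric_corner_general T₀ V hViso A R hR p hroots hpT₀
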